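/- arXiv:2504.02977 — 3 statements merged into one kernel-verified Lean document; each statement's English description precedes it below -/
import Mathlib

section
/- Let G be a finite simple graph, let Ĝ be a looping of G, and let 𝒜 ∈ S_znz(G) be the zero-nonzero pattern of Ĝ. Then the (loop) zero forcing number of Ĝ equals |V(G)| − tri(𝒜). -/
/-!  Common definitions: zero forcing (standard, loop, positive semidefinite),
zero-nonzero patterns, triangles, and related graph parameters. -/

variable {V : Type*}

/-- Standard zero forcing rule: with filled set `S`, the filled vertex `v` can force
its unique unfilled neighbor `u`. -/
def StdForce (G : SimpleGraph V) (S : Set V) (v u : V) : Prop :=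
  v ∈ S ∧ u ∉ S ∧ G.Adj v u ∧ ∀ w, G.Adj v w → w ∉ S → w = u

/-- Adjacency in the looping of `G` with loops at the vertices in `L`
(a vertex counts as its own neighbor iff it has a loop). -/
def LoopAdj (G : SimpleGraph V) (L : Set V) (v w : V) : Prop :=
  G.Adj v w ∨ (v = w ∧ v ∈ L)

/-- Loop zero forcing rule (the forcing vertex need not be filled): `v` can force `u`
if `u` is the only unfilled neighbor of `v` in the looping. -/
def LoopForce (G : SimpleGraph V) (L : Set V) (S : Set V) (v u : V) : Prop :=
  u ∉ S ∧ LoopAdj G L v u ∧ ∀ w, LoopAdj G L v w → w ∉ S → w = u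

/-- Positive semidefinite zero forcing rule: the filled vertex `v` can force the unfilled
vertex `u` if `u` is the only neighbor of `v` in the connected component of `u` of the
subgraph induced by the unfilled vertices. -/
def PsdForce (G : SimpleGraph V) (S : Set V) (v u : V) : Prop :=
  v ∈ S ∧ u ∉ S ∧ G.Adj v u ∧
    ∀ w, G.Adj v w → w ∉ S →
      Relation.ReflTransGen (fun a b => G.Adj a b ∧ a ∉ S ∧ b ∉ S) u w → w = u

/-- The vertices performing a force in a forcing sequence. -/
def sourcesOf (seq : List (V × V)) : Set V := {v | ∃ p ∈ seq, p.1 = v}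

/-- The vertices that get forced in a forcing sequence. -/
def targetsOf (seq : List (V × V)) : Set V := {u | ∃ p ∈ seq, p.2 = u}

/-- The filled set after performing all forces of `seq` starting from `F`. -/
def filledAfter (F : Set V) (seq : List (V × V)) : Set V := F ∪ targetsOf seq

/-- `ValidSeq rule seq F`: starting with `F` as the filled set, the sequence of forces
`seq` is permitted (each force in turn is allowed by `rule`, and each vertex forces
at most once). -/
def ValidSeq (rule : Set V → V → V → Prop) : List (V × V) → Set V → Prop
  | [], _ => True
  | (v, u) :: rest, F => rule F v u ∧ (∀ p ∈ rest, p.1 ≠ v) ∧ ValidSeq rule rest (insert u F)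

/-- `F` is a zero forcing set w.r.t. the forcing rule `rule`. -/
def IsZFSet (rule : Set V → V → V → Prop) (F : Set V) : Prop :=
  ∃ seq : List (V × V), ValidSeq rule seq F ∧ filledAfter F seq = Set.univ

/-- `F` is a zero forcing set (w.r.t. `rule`) from which `R` can be the set of vertices
that force: some (automatically complete) forcing sequence from `F` fills every vertex
and the set of vertices performing a force is exactly `R`. -/
def ForcesWith (rule : Set V → V → V → Prop) (F R : Set V) : Prop :=
  ∃ seq : List (V × V), ValidSeq rule seq F ∧ filledAfter F seq = Set.univ ∧
    sourcesOf seq = R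

/-- The zero forcing number w.r.t. a forcing rule. -/
noncomputable def Znum (rule : Set V → V → V → Prop) : ℕ :=
  sInf {n | ∃ F : Set V, IsZFSet rule F ∧ F.ncard = n}

/-- The (standard) zero forcing number `Z(G)`. -/
noncomputable def Z (G : SimpleGraph V) : ℕ := Znum (StdForce G)

/-- The zero forcing number of the looping of `G` with loops at `L`. -/
noncomputable def Zloop (G : SimpleGraph V) (L : Set V) : ℕ := Znum (LoopForce G L)

/-- The positive semidefinite zero forcing number `Z₊(G)`. -/
noncomputable def Zplus (G : SimpleGraph V) : ℕ := Znum (PsdForce G)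

/-- The enhanced zero forcing number `Ẑ(G)`: the maximum over all loopings of `G` of the
zero forcing number of the looping. -/
noncomputable def Zhat (G : SimpleGraph V) : ℕ := sSup {n | ∃ L : Set V, Zloop G L = n}

/-- `F` is a direct zero forcing set for `G`: some forcing sequence from `F` fills every
vertex and every vertex that performs a force belongs to `F`. -/
def IsDirectZFSet (G : SimpleGraph V) (F : Set V) : Prop :=
  ∃ seq : List (V × V), ValidSeq (StdForce G) seq F ∧ filledAfter F seq = Set.univ ∧
    sourcesOf seq ⊆ F

/-- The direct zero forcing number `Z_d(G)`. -/
noncomputable def Zd (G : SimpleGraph V) : ℕ :=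
  sInf {n | ∃ F : Set V, IsDirectZFSet G F ∧ F.ncard = n}

/-- A zero-nonzero pattern `Y` (entry `Y i j` means the `(i,j)` entry is `*`)
has a `k × k` submatrix that is a triangle. -/
def HasTriOfSize {ρ γ : Type*} (Y : ρ → γ → Prop) (k : ℕ) : Prop :=
  ∃ (r : Fin k → ρ) (c : Fin k → γ), Function.Injective r ∧ Function.Injective c ∧
    (∀ i, Y (r i) (c i)) ∧ ∀ i j : Fin k, i < j → ¬ Y (r i) (c j)

/-- The triangle number `tri(Y)` of a zero-nonzero pattern. -/
noncomputable def tri {ρ γ : Type*} (Y : ρ → γ → Prop) : ℕ := sSup {k | HasTriOfSize Y k}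

/-- Membership in `S_znz(G)`: off the diagonal, the pattern matches the adjacency of `G`. -/
def InSznz (G : SimpleGraph V) (A : V → V → Prop) : Prop :=
  ∀ i j : V, i ≠ j → (A i j ↔ G.Adj i j)

/-- The zero-nonzero pattern of the looping of `G` with loops at `L`. -/
def loopPattern (G : SimpleGraph V) (L : Set V) : V → V → Prop :=
  fun i j => (i = j ∧ i ∈ L) ∨ (i ≠ j ∧ G.Adj i j)

/-- The submatrix of the pattern `Y` with rows `R` and columns `C` is a triangle:
there are enumerations of `R` and `C` realizing a lower-triangular pattern with `*`
diagonal (in particular `|R| = |C|`). -/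
def SubIsTriangle {ρ γ : Type*} (Y : ρ → γ → Prop) (R : Finset ρ) (C : Finset γ) : Prop :=
  ∃ (k : ℕ) (r : Fin k → ρ) (c : Fin k → γ),
    Function.Injective r ∧ Function.Injective c ∧
    (∀ x : ρ, x ∈ R ↔ ∃ i, r i = x) ∧ (∀ y : γ, y ∈ C ↔ ∃ i, c i = y) ∧
    (∀ i, Y (r i) (c i)) ∧ ∀ i j : Fin k, i < j → ¬ Y (r i) (c j)

/-- `(R, C)` is a persistent triangle of `G`. -/
def PersistentTriangle (G : SimpleGraph V) (R C : Finset V) : Prop :=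
  ∀ A : V → V → Prop, InSznz G A → SubIsTriangle A R C

/-- `F` is a direct zero forcing set for `G` from which `R` can be the set of vertices
that force. -/
def DirectForcesWith (G : SimpleGraph V) (F R : Set V) : Prop :=
  ∃ seq : List (V × V), ValidSeq (StdForce G) seq F ∧ filledAfter F seq = Set.univ ∧
    sourcesOf seq = R ∧ R ⊆ F

/-- `(range r, range c)` is a partition of `G` according to the `m × n` pattern `Y`,
with labelings given by `r` and `c`. -/
def PartitionAccording (G : SimpleGraph V) {m n : ℕ} (Y : Fin m → Fin n → Prop)
    (r : Fin m → V) (c : Fin n → V) : Prop :=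
  Function.Injective r ∧ Function.Injective c ∧ (∀ i j, r i ≠ c j) ∧
    (∀ v : V, (∃ i, r i = v) ∨ (∃ j, c j = v)) ∧
    ∀ i j, G.Adj (r i) (c j) ↔ Y i j

/-- `F` is a zero forcing set for `G` that forces from `V1` to `V2`. -/
def ForcesFromTo (G : SimpleGraph V) (F V1 V2 : Set V) : Prop :=
  V1 ⊆ F ∧ ∃ seq : List (V × V), ValidSeq (StdForce G) seq F ∧
    filledAfter F seq = Set.univ ∧ sourcesOf seq ⊆ V1 ∧ targetsOf seq ⊆ V2

/-- `(V1, V2)` is a partition of the vertex set of `G` into two cliques. -/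
def IsCliquePartition (G : SimpleGraph V) (V1 V2 : Set V) : Prop :=
  Disjoint V1 V2 ∧ V1 ∪ V2 = Set.univ ∧ G.IsClique V1 ∧ G.IsClique V2

/-- `G` is cobipartite. -/
def Cobipartite (G : SimpleGraph V) : Prop := ∃ V1 V2 : Set V, IsCliquePartition G V1 V2

/-- `G` is the cobipartite graph associated with the pattern `Y`, via labelings `r`, `c`. -/
def CobipAssociated (G : SimpleGraph V) {m n : ℕ} (Y : Fin m → Fin n → Prop)
    (r : Fin m → V) (c : Fin n → V) : Prop :=
  PartitionAccording G Y r c ∧ G.IsClique (Set.range r) ∧ G.IsClique (Set.range c)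

/-- `z` is a critical vertex: some optimal forcing sequence neither lets `z` force
nor forces `z`. -/
def Critical (G : SimpleGraph V) (z : V) : Prop :=
  ∃ (F : Set V) (seq : List (V × V)), F.ncard = Z G ∧ ValidSeq (StdForce G) seq F ∧
    filledAfter F seq = Set.univ ∧ z ∉ sourcesOf seq ∧ z ∉ targetsOf seq

/-- `z` is an uncritical vertex: in every optimal forcing sequence, exactly one of the
following holds: `z` performs a force, or `z` gets forced. -/
def Uncritical (G : SimpleGraph V) (z : V) : Prop :=
  ∀ (F : Set V) (seq : List (V × V)), F.ncard = Z G → ValidSeq (StdForce G) seq F →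
    filledAfter F seq = Set.univ → (z ∈ sourcesOf seq ↔ z ∉ targetsOf seq)

/-- The maximum nullity `M(G)` over the field `𝔽`. -/
noncomputable def Mnum (𝔽 : Type*) [Field 𝔽] [Fintype V] [DecidableEq V]
    (G : SimpleGraph V) : ℕ :=
  sSup {k | ∃ A : Matrix V V 𝔽, A.IsSymm ∧ (∀ i j : V, i ≠ j → (A i j ≠ 0 ↔ G.Adj i j)) ∧
    k = Fintype.card V - A.rank}

/-- The minimum rank `mr_𝔽(Y)` of a zero-nonzero pattern over the field `𝔽`. -/
noncomputable def mr (𝔽 : Type*) [Field 𝔽] {m n : ℕ} (Y : Fin m → Fin n → Prop) : ℕ :=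
  sInf {k | ∃ A : Matrix (Fin m) (Fin n) 𝔽, (∀ i j, A i j ≠ 0 ↔ Y i j) ∧ A.rank = k}

/-- `G` is a `k`-tree: there is a construction ordering of the vertices in which the
first `k+1` vertices form a clique and every later vertex is adjacent among the earlier
vertices to exactly a `k`-clique. -/
def IsKTree (k : ℕ) [Fintype V] (G : SimpleGraph V) : Prop :=
  k + 1 ≤ Fintype.card V ∧ ∃ ord : V ≃ Fin (Fintype.card V),
    (∀ u v : V, (ord u : ℕ) < k + 1 → (ord v : ℕ) < k + 1 → u ≠ v → G.Adj u v) ∧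
    ∀ v : V, k + 1 ≤ (ord v : ℕ) →
      G.IsClique {u : V | (ord u : ℕ) < (ord v : ℕ) ∧ G.Adj u v} ∧
      {u : V | (ord u : ℕ) < (ord v : ℕ) ∧ G.Adj u v}.ncard = k

/-!
A loop forcing sequence `v₁ → u₁, …, vₖ → uₖ` is a triangle with rows `vᵢ` and columns `uᵢ`:
`vᵢ` is a neighbour of `uᵢ`, but not of `uⱼ` for `j > i`, because `uⱼ` is still unfilled when
`vᵢ` forces and `uᵢ` is its only unfilled neighbour. Hence every zero forcing set misses at most
`tri` vertices. Conversely, the columns of a triangle can be forced one after the other, in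
order, from the set of all other vertices.
-/

section Triangle

variable {ρ γ : Type*} {Y : ρ → γ → Prop} {k : ℕ} {r : Fin k → ρ} {c : Fin k → γ}

theorem injective_rows_of_lowerTriangular (hdiag : ∀ i, Y (r i) (c i))
    (hupper : ∀ i j, i < j → ¬ Y (r i) (c j)) : Function.Injective r := by
  intro i j hij
  by_contra hne
  rcases lt_or_gt_of_ne hne with h | h
  · exact hupper i j h (hij ▸ hdiag j)
  · exact hupper j i h (hij ▸ hdiag i)

theorem injective_cols_of_lowerTriangular (hdiag : ∀ i, Y (r i) (c i))
    (hupper : ∀ i j, i < j → ¬ Y (r i) (c j)) : Function.Injective c := by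
  intro i j hij
  by_contra hne
  rcases lt_or_gt_of_ne hne with h | h
  · exact hupper i j h (hij ▸ hdiag i)
  · exact hupper j i h (hij ▸ hdiag j)

theorem hasTriOfSize_of_lowerTriangular (hdiag : ∀ i, Y (r i) (c i))
    (hupper : ∀ i j, i < j → ¬ Y (r i) (c j)) : HasTriOfSize Y k :=
  ⟨r, c, injective_rows_of_lowerTriangular hdiag hupper,
    injective_cols_of_lowerTriangular hdiag hupper, hdiag, hupper⟩

theorem hasTriOfSize_zero : HasTriOfSize Y 0 :=
  hasTriOfSize_of_lowerTriangular (r := Fin.elim0) (c := Fin.elim0) (fun i ↦ i.elim0)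
    fun i ↦ i.elim0

theorem HasTriOfSize.le_card [Finite γ] (h : HasTriOfSize Y k) : k ≤ Nat.card γ := by
  obtain ⟨-, c, -, hc, -⟩ := h
  simpa using Nat.card_le_card_of_injective c hc

theorem bddAbove_hasTriOfSize [Finite γ] : BddAbove {k | HasTriOfSize Y k} :=
  ⟨Nat.card γ, fun _ h ↦ h.le_card⟩

theorem HasTriOfSize.le_tri [Finite γ] (h : HasTriOfSize Y k) : k ≤ tri Y :=
  le_csSup bddAbove_hasTriOfSize h

theorem hasTriOfSize_tri [Finite γ] : HasTriOfSize Y (tri Y) :=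
  Nat.sSup_mem ⟨0, hasTriOfSize_zero⟩ bddAbove_hasTriOfSize

end Triangle

theorem isZFSet_univ (rule : Set V → V → V → Prop) : IsZFSet rule Set.univ :=
  ⟨[], trivial, Set.univ_union _⟩

theorem ncard_targetsOf_le (seq : List (V × V)) : (targetsOf seq).ncard ≤ seq.length := by
  classical
  have : targetsOf seq = ↑(seq.map Prod.snd).toFinset := by
    ext u; simp [targetsOf]
  rw [this, Set.ncard_coe_finset]
  exact (List.toFinset_card_le _).trans (List.length_map _).le

section Looping

variable {G : SimpleGraph V} {L : Set V}

theorem loopPattern_eq_loopAdj : loopPattern G L = LoopAdj G L := by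
  ext v w
  constructor
  · rintro (⟨rfl, hv⟩ | ⟨-, h⟩)
    · exact Or.inr ⟨rfl, hv⟩
    · exact Or.inl h
  · rintro (h | ⟨rfl, hv⟩)
    · exact Or.inr ⟨h.ne, h⟩
    · exact Or.inl ⟨rfl, hv⟩

theorem ValidSeq.loopForce_snd_notMem :
    ∀ {seq : List (V × V)} {F : Set V}, ValidSeq (LoopForce G L) seq F → ∀ p ∈ seq, p.2 ∉ F
  | [], _, _ => by simp
  | (_, u) :: _, _, ⟨hforce, _, hrest⟩ => by
    rintro p (_ | ⟨_, hp⟩)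
    · exact hforce.1
    · exact fun hF ↦ hrest.loopForce_snd_notMem p hp (Set.mem_insert_of_mem u hF)

theorem ValidSeq.loopForce_lowerTriangular :
    ∀ {seq : List (V × V)} {F : Set V}, ValidSeq (LoopForce G L) seq F →
      (∀ i : Fin seq.length, LoopAdj G L seq[i].1 seq[i].2) ∧
        ∀ i j : Fin seq.length, i < j → ¬ LoopAdj G L seq[i].1 seq[j].2
  | [], _, _ => ⟨fun i ↦ i.elim0, fun i ↦ i.elim0⟩
  | (_, u) :: rest, F, ⟨hforce, _, hrest⟩ => by
    obtain ⟨hdiag, hupper⟩ := hrest.loopForce_lowerTriangular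
    refine ⟨Fin.cases hforce.2.1 hdiag, fun i j hij ↦ ?_⟩
    induction j using Fin.cases with
    | zero => exact absurd hij (Fin.not_lt_zero i)
    | succ j =>
      induction i using Fin.cases with
      | zero =>
        intro hadj
        have htarget : rest[j].2 ∉ insert u F :=
          hrest.loopForce_snd_notMem _ (List.getElem_mem j.isLt)
        exact htarget (Or.inl (hforce.2.2 _ hadj fun hF ↦ htarget (Or.inr hF)))
      | succ i => exact hupper i j (Fin.succ_lt_succ_iff.mp hij)

theorem ValidSeq.loopForce_hasTriOfSize {seq : List (V × V)} {F : Set V}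
    (h : ValidSeq (LoopForce G L) seq F) : HasTriOfSize (LoopAdj G L) seq.length :=
  hasTriOfSize_of_lowerTriangular h.loopForce_lowerTriangular.1 h.loopForce_lowerTriangular.2

theorem validSeq_loopForce_ofFn :
    ∀ {k : ℕ} {r c : Fin k → V}, (∀ i, LoopAdj G L (r i) (c i)) →
      (∀ i j, i < j → ¬ LoopAdj G L (r i) (c j)) →
      ValidSeq (LoopForce G L) (List.ofFn fun i ↦ (r i, c i)) (Set.range c)ᶜ
  | 0, _, _, _, _ => trivial
  | k + 1, r, c, hdiag, hupper => by
    have hr := injective_rows_of_lowerTriangular hdiag hupper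
    have hc := injective_cols_of_lowerTriangular hdiag hupper
    have hc0 : c 0 ∉ Set.range (Fin.tail c) := by
      rintro ⟨i, hi⟩
      exact Fin.succ_ne_zero i (hc hi)
    have hfilled : insert (c 0) (Set.range c)ᶜ = (Set.range (Fin.tail c))ᶜ := by
      ext w
      rw [Fin.range_fin_succ]
      by_cases hw : w = c 0 <;> simp_all
    rw [List.ofFn_succ]
    refine ⟨⟨by simp, hdiag 0, fun w hw hwc ↦ ?_⟩, ?_, ?_⟩
    · obtain ⟨j, rfl⟩ := Set.notMem_compl_iff.mp hwc
      induction j using Fin.cases with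
      | zero => rfl
      | succ j => exact absurd hw (hupper 0 j.succ (Fin.succ_pos j))
    · simp only [List.mem_ofFn]
      rintro _ ⟨i, rfl⟩ h
      exact Fin.succ_ne_zero i (hr h)
    · rw [hfilled]
      exact validSeq_loopForce_ofFn (fun i ↦ hdiag i.succ)
        fun i j h ↦ hupper i.succ j.succ (Fin.succ_lt_succ_iff.mpr h)

theorem isZFSet_loopForce_compl_range {k : ℕ} {r c : Fin k → V}
    (hdiag : ∀ i, LoopAdj G L (r i) (c i)) (hupper : ∀ i j, i < j → ¬ LoopAdj G L (r i) (c j)) :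
    IsZFSet (LoopForce G L) (Set.range c)ᶜ := by
  refine ⟨_, validSeq_loopForce_ofFn hdiag hupper, ?_⟩
  have : targetsOf (List.ofFn fun i ↦ (r i, c i)) = Set.range c := by
    ext u; simp [targetsOf]
  rw [filledAfter, this, Set.compl_union_self]

theorem IsZFSet.card_le_ncard_add_tri [Finite V] {F : Set V} (hF : IsZFSet (LoopForce G L) F) :
    Nat.card V ≤ F.ncard + tri (LoopAdj G L) := by
  obtain ⟨seq, hvalid, hfilled⟩ := hF
  calc Nat.card V = (F ∪ targetsOf seq).ncard := by rw [← filledAfter, hfilled, Set.ncard_univ]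
    _ ≤ F.ncard + (targetsOf seq).ncard := Set.ncard_union_le _ _
    _ ≤ F.ncard + tri (LoopAdj G L) :=
      Nat.add_le_add_left ((ncard_targetsOf_le seq).trans hvalid.loopForce_hasTriOfSize.le_tri) _

end Looping

theorem loop_zero_forcing_eq_card_sub_tri_general
    {V : Type*} [Fintype V] (G : SimpleGraph V) (L : Set V) :
    Zloop G L = Fintype.card V - tri (loopPattern G L) := by
  rw [loopPattern_eq_loopAdj, ← Nat.card_eq_fintype_card]
  refine le_antisymm ?_ (le_csInf ⟨_, Set.univ, isZFSet_univ _, rfl⟩ ?_)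
  · obtain ⟨r, c, -, hc, hdiag, hupper⟩ := hasTriOfSize_tri (Y := LoopAdj G L)
    refine Nat.sInf_le ⟨_, isZFSet_loopForce_compl_range hdiag hupper, ?_⟩
    rw [Set.ncard_compl, Set.ncard_range_of_injective hc, Nat.card_fin]
  · rintro _ ⟨F, hF, rfl⟩
    have := hF.card_le_ncard_add_tri
    omega

/-- The zero forcing number of a looping of `G` equals
`|V(G)| − tri(𝒜)` where `𝒜` is the pattern of the looping. -/
theorem loop_zero_forcing_eq_card_sub_tri
    {V : Type*} [Fintype V] [DecidableEq V] (G : SimpleGraph V) (L : Set V) :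
    Zloop G L = Fintype.card V - tri (loopPattern G L) :=
  loop_zero_forcing_eq_card_sub_tri_general G L
end

section
/- Let G be a finite simple graph and let R and C be subsets of V(G) with |R|=|C|. Then (R,C) is a persistent triangle of G if and only if V(G)∖C is a zero forcing set for G from which R can be the set of vertices that force. -/
/-!  Common definitions: zero forcing (standard, loop, positive semidefinite),
zero-nonzero patterns, triangles, and related graph parameters. -/

variable {V : Type*}

section AuxPT

variable {V : Type*}

private def patD (G : SimpleGraph V) (D : Set V) : V → V → Prop :=
  fun i j => (i ≠ j ∧ G.Adj i j) ∨ (i = j ∧ i ∈ D)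

private lemma patD_mem (G : SimpleGraph V) (D : Set V) : InSznz G (patD G D) := by
  intro i j hij
  simp [patD, hij]

/-- A strict ordering: simultaneously a triangle ordering for every pattern in `S_znz(G)`. -/
private def StrictOrd (G : SimpleGraph V) (R C : Finset V) : Prop :=
  ∃ (k : ℕ) (r c : Fin k → V),
    Function.Injective r ∧ Function.Injective c ∧
    (∀ x, x ∈ R ↔ ∃ i, r i = x) ∧ (∀ y, y ∈ C ↔ ∃ i, c i = y) ∧
    (∀ i, G.Adj (r i) (c i)) ∧
    ∀ i j : Fin k, i < j → ¬ G.Adj (r i) (c j) ∧ r i ≠ c j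

private lemma persistent_to_strict [DecidableEq V] (G : SimpleGraph V) :
    ∀ (n : ℕ) (R C : Finset V), C.card = n → R.card = C.card →
      PersistentTriangle G R C → StrictOrd G R C := by
  intro n
  induction n with
  | zero =>
      intro R C hC hRC _
      have hC0 : C = ∅ := Finset.card_eq_zero.mp hC
      have hR0 : R = ∅ := Finset.card_eq_zero.mp (by rw [hRC, hC])
      refine ⟨0, Fin.elim0, Fin.elim0, fun a => a.elim0, fun a => a.elim0, ?_, ?_,
        fun i => i.elim0, fun i j _ => i.elim0⟩
      · intro x
        subst hR0
        simp only [Finset.notMem_empty, false_iff]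
        rintro ⟨i, -⟩
        exact i.elim0
      · intro y
        subst hC0
        simp only [Finset.notMem_empty, false_iff]
        rintro ⟨i, -⟩
        exact i.elim0
  | succ n ih =>
      intro R C hCcard hRC hP
      classical
      set D : Set V := {x | x ∈ R ∧ x ∈ C ∧ ∃ y ∈ C, G.Adj x y} with hD
      obtain ⟨k, r, c, hrinj, hcinj, hRcov, hCcov, hdiag, habove⟩ :=
        hP (patD G D) (patD_mem G D)
      simp only [patD] at hdiag habove
      have hkpos : 0 < k := by
        obtain ⟨y, hy⟩ := Finset.card_pos.mp (show 0 < C.card by omega)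
        obtain ⟨i, -⟩ := (hCcov y).mp hy
        rcases Nat.eq_zero_or_pos k with h | h
        · subst h; exact i.elim0
        · exact h
      set i0 : Fin k := ⟨0, hkpos⟩ with hi0def
      have hi0le : ∀ t : Fin k, i0 ≤ t := fun t => Fin.le_def.mpr (Nat.zero_le _)
      -- no vertex forces before being forced (P-free)
      have hPfree : ∀ s t : Fin k, s < t → r s ≠ c t := by
        intro s t hst heq
        have hA := habove s t hst
        have hxD : r s ∉ D := fun hmem => hA (Or.inr ⟨heq, hmem⟩)
        have hxR : r s ∈ R := (hRcov (r s)).mpr ⟨s, rfl⟩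
        have hxC : r s ∈ C := (hCcov (r s)).mpr ⟨t, heq.symm⟩
        have hno : ¬ ∃ y ∈ C, G.Adj (r s) y := fun hy => hxD ⟨hxR, hxC, hy⟩
        rcases hdiag s with ⟨_, hadj⟩ | ⟨heq2, _⟩
        · exact hno ⟨c s, (hCcov (c s)).mpr ⟨s, rfl⟩, hadj⟩
        · exact hst.ne (hcinj (heq2.symm.trans heq))
      -- the first pair is not a self pair
      have hvu : r i0 ≠ c i0 := by
        intro heq
        rcases hdiag i0 with ⟨hne, -⟩ | ⟨-, hmem⟩
        · exact hne heq
        · obtain ⟨-, -, y, hyC, hadj⟩ := hmem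
          obtain ⟨t, ht⟩ := (hCcov y).mp hyC
          rw [← ht] at hadj
          by_cases h0 : t = i0
          · subst h0
            rw [heq] at hadj
            exact G.irrefl hadj
          · have hlt : i0 < t := (hi0le t).lt_of_ne (Ne.symm h0)
            have hne2 : r i0 ≠ c t := by
              intro h
              exact h0 (hcinj (h.symm.trans heq))
            exact habove i0 t hlt (Or.inl ⟨hne2, hadj⟩)
      have hAdjvu : G.Adj (r i0) (c i0) := by
        rcases hdiag i0 with ⟨-, h⟩ | ⟨h, -⟩
        · exact h
        · exact absurd h hvu
      have hvC : r i0 ∉ C := by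
        intro h
        obtain ⟨t, ht⟩ := (hCcov _).mp h
        by_cases h0 : t = i0
        · subst h0; exact hvu ht.symm
        · exact hPfree i0 t ((hi0le t).lt_of_ne (Ne.symm h0)) ht.symm
      have huniq : ∀ y ∈ C, G.Adj (r i0) y → y = c i0 := by
        intro y hy hadj
        obtain ⟨t, ht⟩ := (hCcov y).mp hy
        subst ht
        by_cases h0 : t = i0
        · rw [h0]
        · have hlt : i0 < t := (hi0le t).lt_of_ne (Ne.symm h0)
          have hne2 : r i0 ≠ c t := fun he => hvC (he ▸ ((hCcov (c t)).mpr ⟨t, rfl⟩))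
          exact absurd (Or.inl ⟨hne2, hadj⟩) (habove i0 t hlt)
      have hvR : r i0 ∈ R := (hRcov _).mpr ⟨i0, rfl⟩
      have huC : c i0 ∈ C := (hCcov _).mpr ⟨i0, rfl⟩
      -- persistence of the reduced pair
      have hP' : PersistentTriangle G (R.erase (r i0)) (C.erase (c i0)) := by
        intro A hA
        obtain ⟨k', r', c', hrinj', hcinj', hRcov', hCcov', hdiag', habove'⟩ := hP A hA
        obtain ⟨i1, hi1⟩ := (hRcov' _).mp hvR
        have hc'i1 : c' i1 = c i0 := by
          have h1 : r' i1 ≠ c' i1 := by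
            intro h
            apply hvC
            rw [← hi1, h]
            exact (hCcov' _).mpr ⟨i1, rfl⟩
          have h3 : G.Adj (r i0) (c' i1) := by
            rw [← hi1]
            exact (hA _ _ h1).mp (hdiag' i1)
          exact huniq (c' i1) ((hCcov' _).mpr ⟨i1, rfl⟩) h3
        have hk' : k' ≠ 0 := by rintro rfl; exact i1.elim0
        obtain ⟨m, rfl⟩ := Nat.exists_eq_succ_of_ne_zero hk'
        refine ⟨m, fun j => r' (i1.succAbove j), fun j => c' (i1.succAbove j),
          hrinj'.comp Fin.succAbove_right_injective,
          hcinj'.comp Fin.succAbove_right_injective, ?_, ?_,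
          fun j => hdiag' _, fun i j hij => habove' _ _ (Fin.strictMono_succAbove i1 hij)⟩
        · intro x
          rw [Finset.mem_erase]
          constructor
          · rintro ⟨hxv, hxR⟩
            obtain ⟨i, hi⟩ := (hRcov' x).mp hxR
            have hne : i ≠ i1 := by rintro rfl; rw [hi1] at hi; exact hxv hi.symm
            obtain ⟨j, hj⟩ := Fin.exists_succAbove_eq hne
            exact ⟨j, show r' (i1.succAbove j) = x by rw [hj, hi]⟩
          · rintro ⟨j, hj⟩
            rw [← hj]
            refine ⟨?_, (hRcov' _).mpr ⟨_, rfl⟩⟩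
            intro h
            exact Fin.succAbove_ne i1 j (hrinj' (h.trans hi1.symm))
        · intro y
          rw [Finset.mem_erase]
          constructor
          · rintro ⟨hyu, hyC⟩
            obtain ⟨i, hi⟩ := (hCcov' y).mp hyC
            have hne : i ≠ i1 := by rintro rfl; rw [hc'i1] at hi; exact hyu hi.symm
            obtain ⟨j, hj⟩ := Fin.exists_succAbove_eq hne
            exact ⟨j, show c' (i1.succAbove j) = y by rw [hj, hi]⟩
          · rintro ⟨j, hj⟩
            rw [← hj]
            refine ⟨?_, (hCcov' _).mpr ⟨_, rfl⟩⟩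
            intro h
            exact Fin.succAbove_ne i1 j (hcinj' (h.trans hc'i1.symm))
      have hcard1 : (C.erase (c i0)).card = n := by
        rw [Finset.card_erase_of_mem huC, hCcard]
        omega
      have hcard2 : (R.erase (r i0)).card = (C.erase (c i0)).card := by
        rw [Finset.card_erase_of_mem hvR, Finset.card_erase_of_mem huC, hRC]
      obtain ⟨k0, r0, c0, hr0inj, hc0inj, hR0cov, hC0cov, hd0, ha0⟩ :=
        ih (R.erase (r i0)) (C.erase (c i0)) hcard1 hcard2 hP'
      refine ⟨k0 + 1, Fin.cons (r i0) r0, Fin.cons (c i0) c0, ?_, ?_, ?_, ?_, ?_, ?_⟩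
      · rw [Fin.cons_injective_iff]
        refine ⟨?_, hr0inj⟩
        rintro ⟨j, hj⟩
        exact (Finset.mem_erase.mp ((hR0cov _).mpr ⟨j, rfl⟩)).1 hj
      · rw [Fin.cons_injective_iff]
        refine ⟨?_, hc0inj⟩
        rintro ⟨j, hj⟩
        exact (Finset.mem_erase.mp ((hC0cov _).mpr ⟨j, rfl⟩)).1 hj
      · intro x
        constructor
        · intro hx
          by_cases hxv : x = r i0
          · exact ⟨0, by rw [Fin.cons_zero, hxv]⟩
          · obtain ⟨j, hj⟩ := (hR0cov x).mp (Finset.mem_erase.mpr ⟨hxv, hx⟩)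
            exact ⟨j.succ, by rw [Fin.cons_succ, hj]⟩
        · rintro ⟨i, rfl⟩
          induction i using Fin.cases with
          | zero => rw [Fin.cons_zero]; exact hvR
          | succ j =>
              rw [Fin.cons_succ]
              exact Finset.mem_of_mem_erase ((hR0cov _).mpr ⟨j, rfl⟩)
      · intro y
        constructor
        · intro hy
          by_cases hyu : y = c i0
          · exact ⟨0, by rw [Fin.cons_zero, hyu]⟩
          · obtain ⟨j, hj⟩ := (hC0cov y).mp (Finset.mem_erase.mpr ⟨hyu, hy⟩)
            exact ⟨j.succ, by rw [Fin.cons_succ, hj]⟩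
        · rintro ⟨i, rfl⟩
          induction i using Fin.cases with
          | zero => rw [Fin.cons_zero]; exact huC
          | succ j =>
              rw [Fin.cons_succ]
              exact Finset.mem_of_mem_erase ((hC0cov _).mpr ⟨j, rfl⟩)
      · intro i
        induction i using Fin.cases with
        | zero => rw [Fin.cons_zero, Fin.cons_zero]; exact hAdjvu
        | succ j => rw [Fin.cons_succ, Fin.cons_succ]; exact hd0 j
      · intro i j hij
        rcases Fin.eq_zero_or_eq_succ j with rfl | ⟨j', rfl⟩
        · exact absurd hij (Fin.not_lt_zero i)
        rcases Fin.eq_zero_or_eq_succ i with rfl | ⟨i', rfl⟩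
        · rw [Fin.cons_zero, Fin.cons_succ]
          have hjC : c0 j' ∈ C.erase (c i0) := (hC0cov _).mpr ⟨j', rfl⟩
          have h1 : c0 j' ≠ c i0 := (Finset.mem_erase.mp hjC).1
          have h2 : c0 j' ∈ C := Finset.mem_of_mem_erase hjC
          exact ⟨fun hadj => h1 (huniq _ h2 hadj),
            fun heq => hvC (by rw [heq]; exact h2)⟩
        · rw [Fin.cons_succ, Fin.cons_succ]
          exact ha0 i' j' (Fin.succ_lt_succ_iff.mp hij)

private lemma strict_valid (G : SimpleGraph V) :
    ∀ (k : ℕ) (r c : Fin k → V), Function.Injective c →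
      (∀ i, G.Adj (r i) (c i)) →
      (∀ i j : Fin k, i < j → ¬ G.Adj (r i) (c j) ∧ r i ≠ c j) →
      ValidSeq (StdForce G) (List.ofFn (fun i => (r i, c i))) (Set.range c)ᶜ := by
  intro k
  induction k with
  | zero => intro r c _ _ _; exact trivial
  | succ k ih =>
      intro r c hcinj hdiag hstrict
      rw [List.ofFn_succ]
      refine ⟨⟨?_, ?_, hdiag 0, ?_⟩, ?_, ?_⟩
      · -- r 0 is filled
        simp only [Set.mem_compl_iff, Set.mem_range]
        rintro ⟨j, hj⟩
        rcases Fin.eq_zero_or_eq_succ j with rfl | ⟨j', rfl⟩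
        · exact (hdiag 0).ne' hj
        · exact (hstrict 0 j'.succ (Fin.succ_pos j')).2 hj.symm
      · -- c 0 is unfilled
        simp only [Set.mem_compl_iff, Set.mem_range, not_not]
        exact ⟨0, rfl⟩
      · -- uniqueness
        intro w hadj hw
        simp only [Set.mem_compl_iff, not_not] at hw
        obtain ⟨j, hj⟩ := hw
        rcases Fin.eq_zero_or_eq_succ j with rfl | ⟨j', rfl⟩
        · exact hj.symm ▸ rfl
        · rw [← hj] at hadj
          exact absurd hadj (hstrict 0 j'.succ (Fin.succ_pos j')).1
      · -- distinct sources
        intro p hp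
        rw [List.mem_ofFn] at hp
        obtain ⟨i, hi⟩ := hp
        rw [← hi]
        intro h
        have h2 : G.Adj (r 0) (c i.succ) := by
          rw [← h]; exact hdiag i.succ
        exact (hstrict 0 i.succ (Fin.succ_pos i)).1 h2
      · -- tail
        have hEq : insert (c 0) (Set.range c)ᶜ
            = (Set.range (fun j : Fin k => c j.succ))ᶜ := by
          ext x
          simp only [Set.mem_insert_iff, Set.mem_compl_iff, Set.mem_range]
          constructor
          · rintro (rfl | hx)
            · rintro ⟨j, hj⟩
              exact (Fin.succ_ne_zero j) (hcinj hj)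
            · rintro ⟨j, hj⟩
              exact hx ⟨j.succ, hj⟩
          · intro hx
            by_cases h0 : x = c 0
            · exact Or.inl h0
            · refine Or.inr ?_
              rintro ⟨j, hj⟩
              rcases Fin.eq_zero_or_eq_succ j with rfl | ⟨j', rfl⟩
              · exact h0 hj.symm
              · exact hx ⟨j', hj⟩
        rw [hEq]
        exact ih (fun i => r i.succ) (fun i => c i.succ)
          (fun a b hab => Fin.succ_injective _ (hcinj hab))
          (fun i => hdiag i.succ)
          (fun i j hij => hstrict i.succ j.succ (Fin.succ_lt_succ_iff.mpr hij))

private lemma sourcesOf_cons (p : V × V) (l : List (V × V)) :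
    sourcesOf (p :: l) = insert p.1 (sourcesOf l) := by
  ext x
  simp only [sourcesOf, Set.mem_setOf_eq, List.mem_cons, Set.mem_insert_iff]
  constructor
  · rintro ⟨q, (rfl | hq), hq1⟩
    · exact Or.inl hq1.symm
    · exact Or.inr ⟨q, hq, hq1⟩
  · rintro (rfl | ⟨q, hq, hq1⟩)
    · exact ⟨p, Or.inl rfl, rfl⟩
    · exact ⟨q, Or.inr hq, hq1⟩

private lemma targetsOf_cons (p : V × V) (l : List (V × V)) :
    targetsOf (p :: l) = insert p.2 (targetsOf l) := by
  ext x
  simp only [targetsOf, Set.mem_setOf_eq, List.mem_cons, Set.mem_insert_iff]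
  constructor
  · rintro ⟨q, (rfl | hq), hq1⟩
    · exact Or.inl hq1.symm
    · exact Or.inr ⟨q, hq, hq1⟩
  · rintro (rfl | ⟨q, hq, hq1⟩)
    · exact ⟨p, Or.inl rfl, rfl⟩
    · exact ⟨q, Or.inr hq, hq1⟩

private lemma valid_data (G : SimpleGraph V) :
    ∀ (seq : List (V × V)) (F : Set V), ValidSeq (StdForce G) seq F →
      ∃ (r c : Fin seq.length → V),
        Function.Injective r ∧ Function.Injective c ∧
        Set.range r = sourcesOf seq ∧ Set.range c = targetsOf seq ∧
        (∀ i, c i ∉ F) ∧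
        (∀ i, G.Adj (r i) (c i)) ∧
        (∀ i j, i < j → ¬ G.Adj (r i) (c j) ∧ r i ≠ c j) := by
  intro seq
  induction seq with
  | nil =>
      intro F _
      refine ⟨Fin.elim0, Fin.elim0, fun a => a.elim0, fun a => a.elim0, ?_, ?_,
        fun i => i.elim0, fun i => i.elim0, fun i => i.elim0⟩
      · ext x
        simp [sourcesOf]
      · ext x
        simp [targetsOf]
  | cons p rest ihr =>
      obtain ⟨v, u⟩ := p
      intro F hv
      obtain ⟨hforce, hne, hrest⟩ := hv
      obtain ⟨r', c', hrinj', hcinj', hRr, hRc, hcF, hdiag, hstrict⟩ := ihr _ hrest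
      obtain ⟨hvF, huF, hvuAdj, hun⟩ := hforce
      refine ⟨Fin.cons v r', Fin.cons u c', ?_, ?_, ?_, ?_, ?_, ?_, ?_⟩
      · rw [Fin.cons_injective_iff]
        refine ⟨?_, hrinj'⟩
        rw [hRr]
        rintro ⟨q, hq, hq1⟩
        exact hne q hq hq1
      · rw [Fin.cons_injective_iff]
        refine ⟨?_, hcinj'⟩
        rintro ⟨j, hj⟩
        exact hcF j (by rw [hj]; exact Set.mem_insert u F)
      · rw [Fin.range_cons, hRr, sourcesOf_cons]
      · rw [Fin.range_cons, hRc, targetsOf_cons]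
      · intro i
        induction i using Fin.cases with
        | zero => rw [Fin.cons_zero]; exact huF
        | succ j =>
            rw [Fin.cons_succ]
            exact fun h => hcF j (Set.mem_insert_of_mem u h)
      · intro i
        induction i using Fin.cases with
        | zero => rw [Fin.cons_zero, Fin.cons_zero]; exact hvuAdj
        | succ j => rw [Fin.cons_succ, Fin.cons_succ]; exact hdiag j
      · intro i j hij
        rcases Fin.eq_zero_or_eq_succ j with rfl | ⟨j', rfl⟩
        · exact absurd hij (Fin.not_lt_zero i)
        rcases Fin.eq_zero_or_eq_succ i with rfl | ⟨i', rfl⟩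
        · rw [Fin.cons_zero, Fin.cons_succ]
          have h1 : c' j' ∉ F ∧ c' j' ≠ u := by
            have := hcF j'
            simp only [Set.mem_insert_iff, not_or] at this
            exact ⟨this.2, this.1⟩
          exact ⟨fun hadj => h1.2 (hun _ hadj h1.1),
            fun heq => h1.1 (by rw [← heq]; exact hvF)⟩
        · rw [Fin.cons_succ, Fin.cons_succ]
          exact hstrict i' j' (Fin.succ_lt_succ_iff.mp hij)

end AuxPT

/-- `(R, C)` is a persistent triangle of `G` iff `V(G) \\ C` is a zero
forcing set for `G` from which `R` can be the set of vertices that force. -/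

theorem persistent_triangle_iff_zero_forcing
    {V : Type*} [Fintype V] [DecidableEq V] (G : SimpleGraph V)
    (R C : Finset V) (hRC : R.card = C.card) :
    PersistentTriangle G R C ↔ ForcesWith (StdForce G) (↑(Cᶜ) : Set V) (↑R : Set V) := by
  constructor
  · intro hP
    obtain ⟨k, r, c, hrinj, hcinj, hRcov, hCcov, hdiag, hstrict⟩ :=
      persistent_to_strict G C.card R C rfl hRC hP
    have hCr : Set.range c = (↑C : Set V) := by
      ext y
      simp only [Set.mem_range, Finset.coe_sort_coe, Finset.mem_coe]
      exact (hCcov y).symm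
    have hRr : Set.range r = (↑R : Set V) := by
      ext x
      simp only [Set.mem_range, Finset.mem_coe]
      exact (hRcov x).symm
    have hF : (↑(Cᶜ) : Set V) = (Set.range c)ᶜ := by
      rw [Finset.coe_compl, hCr]
    refine ⟨List.ofFn (fun i => (r i, c i)), ?_, ?_, ?_⟩
    · rw [hF]
      exact strict_valid G k r c hcinj hdiag hstrict
    · have ht : targetsOf (List.ofFn fun i => (r i, c i)) = Set.range c := by
        ext x
        simp only [targetsOf, Set.mem_setOf_eq, List.mem_ofFn, Set.mem_range]
        constructor
        · rintro ⟨q, ⟨i, rfl⟩, hq2⟩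
          exact ⟨i, hq2⟩
        · rintro ⟨i, hi⟩
          exact ⟨(r i, c i), ⟨i, rfl⟩, hi⟩
      rw [filledAfter, ht, hF, Set.compl_union_self]
    · have hs : sourcesOf (List.ofFn fun i => (r i, c i)) = Set.range r := by
        ext x
        simp only [sourcesOf, Set.mem_setOf_eq, List.mem_ofFn, Set.mem_range]
        constructor
        · rintro ⟨q, ⟨i, rfl⟩, hq1⟩
          exact ⟨i, hq1⟩
        · rintro ⟨i, hi⟩
          exact ⟨(r i, c i), ⟨i, rfl⟩, hi⟩
      rw [hs, hRr]
  · rintro ⟨seq, hval, hfill, hsrc⟩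
    obtain ⟨r, c, hrinj, hcinj, hRr, hRc, hcF, hdiag, hstrict⟩ := valid_data G seq _ hval
    have hcC : ∀ i, c i ∈ C := by
      intro i
      have := hcF i
      simp only [Finset.coe_compl, Set.mem_compl_iff, Finset.mem_coe, not_not] at this
      exact this
    have hCrange : ∀ y, y ∈ C ↔ ∃ i, c i = y := by
      intro y
      constructor
      · intro hy
        have hy2 : (y : V) ∈ filledAfter (↑(Cᶜ) : Set V) seq := by
          rw [hfill]; exact Set.mem_univ y
        rcases hy2 with hy2 | hy2
        · exact absurd hy2 (by simp [hy])
        · rw [← hRc] at hy2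
          exact hy2
      · rintro ⟨i, rfl⟩
        exact hcC i
    have hRrange : ∀ x, x ∈ R ↔ ∃ i, r i = x := by
      intro x
      rw [show (x ∈ R) ↔ x ∈ (↑R : Set V) from (Finset.mem_coe).symm, ← hsrc, ← hRr]
      exact Iff.rfl
    intro A hA
    refine ⟨seq.length, r, c, hrinj, hcinj, hRrange, hCrange, ?_, ?_⟩
    · intro i
      exact (hA _ _ (hdiag i).ne).mpr (hdiag i)
    · intro i j hij hAij
      exact (hstrict i j hij).1 ((hA _ _ (hstrict i j hij).2).mp hAij)
end

section
/- Let G be a finite simple graph and let R and C be subsets of V(G) with |R|=|C|. Then (R,C) is an immutable triangle of G if and only if V(G)∖C is a direct zero forcing set for G from which R can be the set of vertices that force. -/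
/-!  Common definitions: zero forcing (standard, loop, positive semidefinite),
zero-nonzero patterns, triangles, and related graph parameters. -/

variable {V : Type*}

/-!
A direct forcing sequence from `V(G) ∖ C` is a list of forces `r₁ → c₁, …, rₖ → cₖ` in which
every `rᵢ` is filled from the start and the `cᵢ` are the vertices of `C`. It is valid exactly
when `rᵢ ~ cᵢ` and `rᵢ ≁ cⱼ` for `i < j` (when `rᵢ` forces, the `cⱼ` with `j > i` are still
unfilled), that is, when `(rᵢ)` and `(cᵢ)` enumerate a triangle of the adjacency pattern. As
`R ∩ C = ∅`, this triangle involves only off-diagonal entries, so it is a triangle of every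
pattern in `S_znz(G)`.
-/

section TriangleList

variable {ρ γ : Type*}

def IsTriangleList (Y : ρ → γ → Prop) (seq : List (ρ × γ)) : Prop :=
  (∀ p ∈ seq, Y p.1 p.2) ∧ seq.Pairwise fun p q => p.1 ≠ q.1 ∧ p.2 ≠ q.2 ∧ ¬ Y p.1 q.2

theorem IsTriangleList.of_iff {Y Y' : ρ → γ → Prop} {seq : List (ρ × γ)}
    (h : IsTriangleList Y seq) (hY : ∀ p ∈ seq, ∀ q ∈ seq, (Y' p.1 q.2 ↔ Y p.1 q.2)) :
    IsTriangleList Y' seq :=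
  ⟨fun p hp => (hY p hp p hp).2 (h.1 p hp),
    h.2.imp_of_mem fun hp hq ⟨h1, h2, h3⟩ => ⟨h1, h2, fun h' => h3 ((hY _ hp _ hq).1 h')⟩⟩

theorem List.Pairwise.injective_get {α β : Type*} {l : List α} {f : α → β}
    (h : l.Pairwise fun a b => f a ≠ f b) : Function.Injective fun i => f (l.get i) := by
  rw [List.pairwise_iff_get] at h
  intro i j hij
  by_contra hne
  rcases lt_or_gt_of_ne hne with hlt | hlt
  exacts [h i j hlt hij, h j i hlt hij.symm]

theorem subIsTriangle_iff_exists_isTriangleList {Y : ρ → γ → Prop} {R : Finset ρ}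
    {C : Finset γ} :
    SubIsTriangle Y R C ↔ ∃ seq : List (ρ × γ), IsTriangleList Y seq ∧
      (R : Set ρ) = {x | ∃ p ∈ seq, p.1 = x} ∧ (C : Set γ) = {y | ∃ p ∈ seq, p.2 = y} := by
  constructor
  · rintro ⟨k, r, c, hr, hc, hR, hC, hdiag, hup⟩
    refine ⟨List.ofFn fun i => (r i, c i), ⟨?_, ?_⟩, ?_, ?_⟩
    · simp only [List.mem_ofFn]
      rintro _ ⟨i, rfl⟩
      exact hdiag i
    · exact List.pairwise_ofFn.2 fun i j hij =>
        ⟨hr.ne hij.ne, hc.ne hij.ne, hup i j hij⟩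
    · ext x
      simp [hR]
    · ext y
      simp [hC]
  · rintro ⟨seq, ⟨hdiag, hpair⟩, hR, hC⟩
    have hget : ∀ i, seq.get i ∈ seq := fun i => List.get_mem seq i
    refine ⟨seq.length, fun i => (seq.get i).1, fun i => (seq.get i).2,
      (hpair.imp fun h => h.1).injective_get, (hpair.imp fun h => h.2.1).injective_get,
      ?_, ?_, fun i => hdiag _ (hget i),
      fun i j hij => ((List.pairwise_iff_get.1 hpair) i j hij).2.2⟩
    · intro x
      rw [← Finset.mem_coe, hR]
      simp [List.mem_iff_get]
    · intro y
      rw [← Finset.mem_coe, hC]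
      simp [List.mem_iff_get]

end TriangleList

section ForcingSequence

variable {G : SimpleGraph V}

theorem ValidSeq.snd_notMem {seq : List (V × V)} {F : Set V}
    (h : ValidSeq (StdForce G) seq F) : ∀ p ∈ seq, p.2 ∉ F := by
  induction seq generalizing F with
  | nil => simp
  | cons hd tl ih =>
    obtain ⟨⟨_, hu, _⟩, _, hrest⟩ := h
    rintro p (_ | ⟨_, hp⟩)
    · exact hu
    · exact fun hF => ih hrest p hp (Set.mem_insert_of_mem _ hF)

theorem ValidSeq.isTriangleList {seq : List (V × V)} {F : Set V}
    (h : ValidSeq (StdForce G) seq F) : IsTriangleList G.Adj seq := by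
  induction seq generalizing F with
  | nil => exact ⟨by simp, .nil⟩
  | cons hd tl ih =>
    obtain ⟨v, u⟩ := hd
    obtain ⟨⟨_, _, huv, huniq⟩, hne, hrest⟩ := h
    obtain ⟨ihdiag, ihpair⟩ := ih hrest
    have hlater : ∀ q ∈ tl, q.2 ∉ insert u F := hrest.snd_notMem
    refine ⟨?_, .cons (fun q hq => ?_) ihpair⟩
    · rintro p (_ | ⟨_, hp⟩)
      exacts [huv, ihdiag p hp]
    · have hqu : q.2 ≠ u := fun h => hlater q hq (h ▸ Set.mem_insert _ _)
      exact ⟨(hne q hq).symm, hqu.symm, fun hadj =>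
        hqu (huniq _ hadj fun hF => hlater q hq (Set.mem_insert_of_mem _ hF))⟩

theorem ValidSeq.targetsOf_eq_compl {seq : List (V × V)} {F : Set V}
    (h : ValidSeq (StdForce G) seq F) (hfill : filledAfter F seq = Set.univ) :
    targetsOf seq = Fᶜ := by
  refine Set.Subset.antisymm (fun _ ⟨p, hp, hpy⟩ => hpy ▸ h.snd_notMem p hp) fun y hy => ?_
  exact (hfill.ge (Set.mem_univ y)).resolve_left hy

theorem validSeq_of_isTriangleList {seq : List (V × V)} {F : Set V}
    (h : IsTriangleList G.Adj seq) (hsrc : ∀ p ∈ seq, p.1 ∈ F ∧ p.2 ∉ F)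
    (hcover : Fᶜ ⊆ targetsOf seq) : ValidSeq (StdForce G) seq F := by
  induction seq generalizing F with
  | nil => trivial
  | cons hd tl ih =>
    obtain ⟨v, u⟩ := hd
    obtain ⟨hdiag, hhead, hpair⟩ := And.imp_right List.pairwise_cons.1 h
    obtain ⟨hv, hu⟩ := hsrc _ (.head _)
    have hforce : StdForce G F v u := by
      refine ⟨hv, hu, hdiag _ (.head _), fun w hw hwF => ?_⟩
      obtain ⟨q, hq | ⟨_, hq⟩, rfl⟩ := hcover hwF
      · rfl
      · exact absurd hw (hhead q hq).2.2
    refine ⟨hforce, fun q hq => (hhead q hq).1.symm,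
      ih ⟨fun p hp => hdiag p (.tail _ hp), hpair⟩ (fun q hq => ?_) fun w hw => ?_⟩
    · refine ⟨Set.mem_insert_of_mem _ (hsrc q (.tail _ hq)).1, ?_⟩
      rintro (h | h)
      exacts [(hhead q hq).2.1 h.symm, (hsrc q (.tail _ hq)).2 h]
    · obtain ⟨q, hq | ⟨_, hq⟩, rfl⟩ := hcover fun hF => hw (Set.mem_insert_of_mem _ hF)
      · exact absurd (Set.mem_insert _ _) hw
      · exact ⟨q, hq, rfl⟩

end ForcingSequence

theorem immutable_triangle_iff_direct_forcing_general
    {V : Type*} [Fintype V] [DecidableEq V] (G : SimpleGraph V)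
    (R C : Finset V) :
    (PersistentTriangle G R C ∧ Disjoint R C) ↔
      DirectForcesWith G (↑(Cᶜ) : Set V) (↑R : Set V) := by
  rw [Finset.coe_compl]
  constructor
  · rintro ⟨hPT, hdisj⟩
    obtain ⟨seq, htri, hR, hC⟩ :=
      subIsTriangle_iff_exists_isTriangleList.1 (hPT G.Adj fun _ _ _ => Iff.rfl)
    change (R : Set V) = sourcesOf seq at hR
    change (C : Set V) = targetsOf seq at hC
    have hRC : (R : Set V) ⊆ (C : Set V)ᶜ := Set.subset_compl_iff_disjoint_right.2 (by simpa)
    have hsrc : ∀ p ∈ seq, p.1 ∈ (C : Set V)ᶜ ∧ p.2 ∉ (C : Set V)ᶜ := fun p hp =>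
      ⟨hRC (hR ▸ ⟨p, hp, rfl⟩), not_not.2 (hC ▸ ⟨p, hp, rfl⟩)⟩
    refine ⟨seq, validSeq_of_isTriangleList htri hsrc (by rw [compl_compl, hC]), ?_,
      hR.symm, hRC⟩
    rw [filledAfter, ← hC, Set.compl_union_self]
  · rintro ⟨seq, hvalid, hfill, hsrc, hRC⟩
    have hC : targetsOf seq = C := by rw [hvalid.targetsOf_eq_compl hfill, compl_compl]
    have hne : ∀ p ∈ seq, ∀ q ∈ seq, p.1 ≠ q.2 := by
      intro p hp q hq h
      have hp1 : p.1 ∈ (R : Set V) := hsrc ▸ ⟨p, hp, rfl⟩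
      have hq2 : q.2 ∈ (C : Set V) := hC ▸ ⟨q, hq, rfl⟩
      exact hRC hp1 (h ▸ hq2)
    refine ⟨fun A hA => subIsTriangle_iff_exists_isTriangleList.2
      ⟨seq, hvalid.isTriangleList.of_iff fun p hp q hq => hA _ _ (hne p hp q hq), hsrc.symm,
        hC.symm⟩, ?_⟩
    simpa using Set.subset_compl_iff_disjoint_right.1 hRC

/-- `(R, C)` is an immutable triangle of `G` iff `V(G) \\ C` is a direct
zero forcing set for `G` from which `R` can be the set of vertices that force. -/
theorem immutable_triangle_iff_direct_forcing
    {V : Type*} [Fintype V] [DecidableEq V] (G : SimpleGraph V)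
    (R C : Finset V) (hRC : R.card = C.card) :
    (PersistentTriangle G R C ∧ Disjoint R C) ↔
      DirectForcesWith G (↑(Cᶜ) : Set V) (↑R : Set V) :=
  immutable_triangle_iff_direct_forcing_general G R C
end
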